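/- arXiv:0911.5722 — 7 statements merged into one kernel-verified Lean document; each statement's English description precedes it below -/
import Mathlib

section
/- Let h be a linear function on flag vectors of convex polytopes with values in polynomials in x,y, satisfying h(pt)=1, h(IΔ)=(x+y)h(Δ) and h(DΔ)=xy·h(Δ) for the cylinder operator I and the operator D=IC−CC (C the cone operator). Then defining g(Δ)=h(CΔ)−x·h(Δ), one has g(∅)=1 and g(CL)=y·g(L) for every polytope L, i.e. h is a generalised h-vector. -/
open MvPolynomial

noncomputable section

abbrev R2 : Type := MvPolynomial (Fin 2) ℚ

def px : R2 := X 0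
def py : R2 := X 1

/-- if a linear function `h` on the span of flag vectors satisfies
`h(pt)=1`, `h(IΔ)=(x+y)h(Δ)` and `h(DΔ)=xy·h(Δ)` (where `D = IC - CC`), then
`g(Δ) := h(CΔ) - x·h(Δ)` satisfies `g(∅)=1` and `g(CL)=y·g(L)`, i.e. `h` is a
generalised h-vector.  (`fempty` is the flag vector of `∅`, with `C∅ = pt` and
`h(∅)=0`, being the empty sum over faces.) -/
theorem stmt0 {V : Type} [AddCommGroup V] [Module ℚ V]
    (Cop Iop : V →ₗ[ℚ] V) (fempty fpt : V)
    (hCe : Cop fempty = fpt)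
    (h : V →ₗ[ℚ] R2)
    (hpt : h fpt = 1) (h0 : h fempty = 0)
    (hI : ∀ v, h (Iop v) = (px + py) * h v)
    (hD : ∀ v, h (Iop (Cop v) - Cop (Cop v)) = px * py * h v) :
    (h (Cop fempty) - px * h fempty = 1) ∧
      ∀ v : V, h (Cop (Cop v)) - px * h (Cop v) = py * (h (Cop v) - px * h v) := by
  refine ⟨by rw [hCe, hpt, h0, mul_zero, sub_zero], fun v => ?_⟩
  have hCC : h (Cop (Cop v)) = (px + py) * h (Cop v) - px * py * h v := by
    have hDv := hD v
    rw [map_sub, hI] at hDv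
    linear_combination -hDv
  rw [hCC]
  ring
end
end

section
/- Suppose h is a generalised h-vector, i.e. h(Δ)=Σ_{δ⊆Δ}(x−y)^{dim δ} g(L_δ) with g linear, g(∅)=1 and g(CL)=y·g(L). Then for every convex polytope Δ: h(IΔ)=(x+y)·h(Δ). -/
open MvPolynomial

noncomputable section

theorem Fintype.sum_equiv_sum_sum {α β M : Type*} [Fintype α] [Fintype β] [AddCommMonoid M]
    (e : α ≃ β ⊕ β ⊕ β) (f : α → M) :
    ∑ a, f a = ∑ b, (f (e.symm (.inl b)) + f (e.symm (.inr (.inl b)))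
      + f (e.symm (.inr (.inr b)))) := by
  rw [← e.symm.sum_comp, Fintype.sum_sum_type, Fintype.sum_sum_type,
    Finset.sum_add_distrib, Finset.sum_add_distrib, add_assoc]

/-- `e Δ` lists the faces of the cylinder `IΔ` as `δ × {0}`, `δ × {1}` (same dimension, link `C L_δ`)
and `δ × [0,1]` (dimension one more, link `L_δ`), for `δ` a face of `Δ`. -/
theorem stmt1_general {V P : Type} [AddCommGroup V] [Module ℚ V]
    (Cop : V →ₗ[ℚ] V)
    (F : P → Type) [∀ Δ, Fintype (F Δ)]
    (fdim : (Δ : P) → F Δ → ℕ) (link : (Δ : P) → F Δ → V)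
    (g : V →ₗ[ℚ] R2)
    (hgC : ∀ v : V, g (Cop v) = py * g v)
    (cyl : P → P)
    (e : (Δ : P) → F (cyl Δ) ≃ (F Δ ⊕ F Δ ⊕ F Δ))
    (hdim : ∀ (Δ : P) (δ : F (cyl Δ)),
      fdim (cyl Δ) δ = Sum.elim (fun δ₁ => fdim Δ δ₁)
        (Sum.elim (fun δ₁ => fdim Δ δ₁) (fun δ₁ => fdim Δ δ₁ + 1)) (e Δ δ))
    (hlink : ∀ (Δ : P) (δ : F (cyl Δ)),
      link (cyl Δ) δ = Sum.elim (fun δ₁ => Cop (link Δ δ₁))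
        (Sum.elim (fun δ₁ => Cop (link Δ δ₁)) (fun δ₁ => link Δ δ₁)) (e Δ δ)) :
    ∀ Δ : P,
      (∑ δ : F (cyl Δ), (px - py) ^ fdim (cyl Δ) δ * g (link (cyl Δ) δ))
        = (px + py) * ∑ δ : F Δ, (px - py) ^ fdim Δ δ * g (link Δ δ) := by
  intro Δ
  rw [Fintype.sum_equiv_sum_sum (e Δ), Finset.mul_sum]
  refine Fintype.sum_congr _ _ fun δ => ?_
  -- with `t = (x - y)^(dim δ) g(L_δ)`, the ends `δ × {0}, δ × {1}` contribute `y·t` each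
  -- and the prism `δ × [0,1]` contributes `(x - y)·t`, in total `(x + y)·t`
  simp only [hdim, hlink, Equiv.apply_symm_apply, Sum.elim_inl, Sum.elim_inr, hgC]
  ring

/-- for a generalised h-vector
`h(Δ) = Σ_{δ ⊆ Δ} (x-y)^(dim δ) g(L_δ)` (with `g` linear, `g(∅)=1`,
`g(CL)=y·g(L)`) one has `h(IΔ) = (x+y)·h(Δ)`.
Faces of the cylinder `IΔ` are `δ×{0}`, `δ×{1}` (same dimension, link `C L_δ`)
and `δ×[0,1]` (dimension one more, link `L_δ`), for `δ` a face of `Δ`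
(including `Δ` itself, whose link is `∅`, with flag vector `fempty`). -/
theorem stmt1 {V P : Type} [AddCommGroup V] [Module ℚ V]
    (Cop : V →ₗ[ℚ] V) (fempty : V)
    (F : P → Type) [∀ Δ, Fintype (F Δ)]
    (fdim : (Δ : P) → F Δ → ℕ) (link : (Δ : P) → F Δ → V)
    (g : V →ₗ[ℚ] R2)
    (hg0 : g fempty = 1) (hgC : ∀ v : V, g (Cop v) = py * g v)
    (cyl : P → P)
    (e : (Δ : P) → F (cyl Δ) ≃ (F Δ ⊕ F Δ ⊕ F Δ))
    (hdim : ∀ (Δ : P) (δ : F (cyl Δ)),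
      fdim (cyl Δ) δ = Sum.elim (fun δ₁ => fdim Δ δ₁)
        (Sum.elim (fun δ₁ => fdim Δ δ₁) (fun δ₁ => fdim Δ δ₁ + 1)) (e Δ δ))
    (hlink : ∀ (Δ : P) (δ : F (cyl Δ)),
      link (cyl Δ) δ = Sum.elim (fun δ₁ => Cop (link Δ δ₁))
        (Sum.elim (fun δ₁ => Cop (link Δ δ₁)) (fun δ₁ => link Δ δ₁)) (e Δ δ)) :
    ∀ Δ : P,
      (∑ δ : F (cyl Δ), (px - py) ^ fdim (cyl Δ) δ * g (link (cyl Δ) δ))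
        = (px + py) * ∑ δ : F Δ, (px - py) ^ fdim Δ δ * g (link Δ δ) :=
  stmt1_general Cop F fdim link g hgC cyl e hdim hlink
end
end

section
/- Suppose h is a generalised h-vector. Then for every convex polytope Δ: h(CΔ) = g(Δ) + x·h(Δ), where C is the cone operator. -/
open MvPolynomial

noncomputable section

/-- A face `δ` of `Δ` occurs in `CΔ` both as itself, with link `C L_δ`, and as the cone `Cδ`, one
dimension higher, with link `L_δ`; since `g (C L) = y g(L)` the two terms add up to `x` times the
term of `δ` in `h(Δ)`. -/
theorem face_add_cone_term {R : Type*} [CommRing R] (x y a : R) (d : ℕ) :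
    (x - y) ^ d * (y * a) + (x - y) ^ (d + 1) * a = x * ((x - y) ^ d * a) := by
  ring

theorem stmt2_general {V P : Type} [AddCommGroup V] [Module ℚ V]
    (Cop : V →ₗ[ℚ] V) (f : P → V)
    (F : P → Type) [∀ Δ, Fintype (F Δ)]
    (fdim : (Δ : P) → F Δ → ℕ) (link : (Δ : P) → F Δ → V)
    (g : V →ₗ[ℚ] R2)
    (hgC : ∀ v : V, g (Cop v) = py * g v)
    (cone : P → P)
    (e : (Δ : P) → F (cone Δ) ≃ (Unit ⊕ F Δ ⊕ F Δ))
    (hdim : ∀ (Δ : P) (δ : F (cone Δ)),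
      fdim (cone Δ) δ = Sum.elim (fun _ => 0)
        (Sum.elim (fun δ₁ => fdim Δ δ₁) (fun δ₁ => fdim Δ δ₁ + 1)) (e Δ δ))
    (hlink : ∀ (Δ : P) (δ : F (cone Δ)),
      link (cone Δ) δ = Sum.elim (fun _ => f Δ)
        (Sum.elim (fun δ₁ => Cop (link Δ δ₁)) (fun δ₁ => link Δ δ₁)) (e Δ δ)) :
    ∀ Δ : P,
      (∑ δ : F (cone Δ), (px - py) ^ fdim (cone Δ) δ * g (link (cone Δ) δ))
        = g (f Δ) + px * ∑ δ : F Δ, (px - py) ^ fdim Δ δ * g (link Δ δ) := by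
  intro Δ
  rw [← (e Δ).symm.sum_comp, Fintype.sum_sum_type, Fintype.sum_sum_type, ← Finset.sum_add_distrib,
    Finset.mul_sum]
  simp only [hdim, hlink, Equiv.apply_symm_apply, Sum.elim_inl, Sum.elim_inr, hgC,
    Fintype.sum_unique, pow_zero, one_mul, face_add_cone_term]

/-- for a generalised h-vector
`h(Δ) = Σ_{δ ⊆ Δ} (x-y)^(dim δ) g(L_δ)` one has `h(CΔ) = g(Δ) + x·h(Δ)`.
Faces of the cone `CΔ` are: the apex (dimension 0, link `Δ`), the faces `δ`
of `Δ` (same dimension, link `C L_δ`), and the cones `Cδ` (dimension one more,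
link `L_δ`); here `f Δ` is the flag vector of `Δ`. -/
theorem stmt2 {V P : Type} [AddCommGroup V] [Module ℚ V]
    (Cop : V →ₗ[ℚ] V) (fempty : V) (f : P → V)
    (F : P → Type) [∀ Δ, Fintype (F Δ)]
    (fdim : (Δ : P) → F Δ → ℕ) (link : (Δ : P) → F Δ → V)
    (g : V →ₗ[ℚ] R2)
    (hg0 : g fempty = 1) (hgC : ∀ v : V, g (Cop v) = py * g v)
    (cone : P → P)
    (e : (Δ : P) → F (cone Δ) ≃ (Unit ⊕ F Δ ⊕ F Δ))
    (hdim : ∀ (Δ : P) (δ : F (cone Δ)),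
      fdim (cone Δ) δ = Sum.elim (fun _ => 0)
        (Sum.elim (fun δ₁ => fdim Δ δ₁) (fun δ₁ => fdim Δ δ₁ + 1)) (e Δ δ))
    (hlink : ∀ (Δ : P) (δ : F (cone Δ)),
      link (cone Δ) δ = Sum.elim (fun _ => f Δ)
        (Sum.elim (fun δ₁ => Cop (link Δ δ₁)) (fun δ₁ => link Δ δ₁)) (e Δ δ)) :
    ∀ Δ : P,
      (∑ δ : F (cone Δ), (px - py) ^ fdim (cone Δ) δ * g (link (cone Δ) δ))
        = g (f Δ) + px * ∑ δ : F Δ, (px - py) ^ fdim Δ δ * g (link Δ δ) :=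
  stmt2_general Cop f F fdim link g hgC cone e hdim hlink
end
end

section
/- For the complete generalised h-vector: h(CCD·pt) = ⟨1,2⟩ + ⟨0,1⟩·w_{0;0} and h(CDC·pt) = ⟨1,2⟩ + w_{0;1}; consequently for v with h(v)=w_{0;0} (namely v=(CD−DC)·pt) one has h(Cv)=⟨0,1⟩w_{0;0} − w_{0;1}. -/
/-! The new symbols come only from `g ∘ D`: it turns `h(pt) = ⟨0,0⟩ w_∅` into `w_{0;0}` and
`h(C·pt) = ⟨0,1⟩ w_∅` into `w_{0;1}`. Unfolding `C` twice gives `h(CCw) = ⟨0,1⟩ g(w) + x² h(w)`,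
and in both words the coefficient of `w_∅` collapses to `xy(y² + xy + x²) = ⟨1,2⟩`;
the last identity is the difference of the first two. -/
open MvPolynomial

noncomputable section

/-- Keys `k = ((d₁,…,d_r),(c₁,…,c_r))` indexing the formal symbols `w_k`. -/
abbrev Key : Type := List ℕ × List ℕ

/-- The module of keyed polynomials `Σ_k p_k w_k`. -/
abbrev KMod : Type := Key →₀ R2

/-- The formal symbol `w_k`. -/
def wsym (k : Key) : KMod := Finsupp.single k 1

/-- `⟨j⟩ = y^j + x y^(j-1) + ⋯ + x^j`. -/
def br (j : ℕ) : R2 := ∑ t ∈ Finset.range (j + 1), px ^ t * py ^ (j - t)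

/-- `⟨i,j⟩ = (xy)^i ⟨j⟩`. -/
def brr (i j : ℕ) : R2 := (px * py) ^ i * br j

/-- degree of a key: `2 Σ dᵢ + Σ cᵢ + 3r`. -/
def degKey (k : Key) : ℕ := 2 * k.1.sum + k.2.sum + 3 * k.1.length

theorem brr_zero_zero : brr 0 0 = 1 := by
  simp [brr, br]

theorem brr_zero_one : brr 0 1 = py + px := by
  simp [brr, br, Finset.sum_range_succ]

theorem brr_one_two : brr 1 2 = px * py * (py ^ 2 + px * py + px ^ 2) := by
  simp [brr, br, Finset.sum_range_succ]

theorem h_Cop_Cop_eq {V : Type} [AddCommGroup V] [Module ℚ V] {Cop : V →ₗ[ℚ] V}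
    {h g : V →ₗ[ℚ] KMod}
    (hC : ∀ v : V, h (Cop v) = g v + px • h v) (gC : ∀ v : V, g (Cop v) = py • g v) (v : V) :
    h (Cop (Cop v)) = brr 0 1 • g v + px ^ 2 • h v := by
  rw [hC, gC, hC, brr_zero_one]
  module

/-- for the complete generalised h-vector,
`h(CCD·pt) = ⟨1,2⟩ + ⟨0,1⟩·w_{0;0}` and `h(CDC·pt) = ⟨1,2⟩ + w_{0;1}`;
consequently for `v = (CD - DC)·pt`, which has `h(v) = w_{0;0}`, one gets
`h(Cv) = ⟨0,1⟩·w_{0;0} - w_{0;1}`. -/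
theorem stmt10 {V : Type} [AddCommGroup V] [Module ℚ V]
    (Cop Dop : V →ₗ[ℚ] V) (ptv : V)
    (h g : V →ₗ[ℚ] KMod)
    (hpt : h ptv = wsym ([], []))
    (gpt : g ptv = py • wsym ([], []))
    (hC : ∀ v : V, h (Cop v) = g v + px • h v)
    (hD : ∀ v : V, h (Dop v) = (px * py) • h v)
    (gC : ∀ v : V, g (Cop v) = py • g v)
    (gD : ∀ (v : V) (i j : ℕ) (k : Key), h v = brr i j • wsym k →
      g (Dop v) = ((px * py) ^ (i + 1) * py ^ (j + 1)) • wsym k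
        + wsym (i :: k.1, j :: k.2)) :
    h (Cop (Cop (Dop ptv))) = brr 1 2 • wsym ([], []) + brr 0 1 • wsym ([0], [0])
    ∧ h (Cop (Dop (Cop ptv))) = brr 1 2 • wsym ([], []) + wsym ([0], [1])
    ∧ h (Cop (Cop (Dop ptv) - Dop (Cop ptv)))
        = brr 0 1 • wsym ([0], [0]) - wsym ([0], [1]) := by
  have hCpt : h (Cop ptv) = brr 0 1 • wsym ([], []) := by
    rw [hC, gpt, hpt, brr_zero_one]
    module
  have gDpt := gD ptv 0 0 ([], []) (by rw [hpt, brr_zero_zero, one_smul])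
  have gDCpt := gD (Cop ptv) 0 1 ([], []) hCpt
  have hCCD : h (Cop (Cop (Dop ptv))) = brr 1 2 • wsym ([], []) + brr 0 1 • wsym ([0], [0]) := by
    rw [h_Cop_Cop_eq hC gC, gDpt, hD, hpt, brr_one_two, brr_zero_one]
    module
  have hCDC : h (Cop (Dop (Cop ptv))) = brr 1 2 • wsym ([], []) + wsym ([0], [1]) := by
    rw [hC, gDCpt, hD, hCpt, brr_one_two, brr_zero_one]
    module
  refine ⟨hCCD, hCDC, ?_⟩
  rw [map_sub, map_sub, hCCD, hCDC]
  abel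
end
end

section
/- The c₀-component (coefficient of w_{0;1}) of any complete palindromic keyed generalised h-vector vanishes on the four 4-dimensional CD-polytopes CCCC·pt, DCC·pt, DD·pt and CCD·pt, whose flag vectors span a hyperplane H in the 5-dimensional span of 4-polytope flag vectors. -/
open MvPolynomial

noncomputable section

variable {V : Type} [AddCommGroup V] [Module ℚ V]

/-- the flag vector of the CD-word `w` applied to a point (`true` = cone `C`,
`false` = `D`), read with the outermost operator first. -/
def cdVec (Cop Dop : V →ₗ[ℚ] V) (ptv : V) : List Bool → V
  | [] => ptv
  | true :: w => Cop (cdVec Cop Dop ptv w)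
  | false :: w => Dop (cdVec Cop Dop ptv w)

/-- dimension of the polytope `W·pt` for a CD-word `W`. -/
def wordDim (w : List Bool) : ℕ := w.count true + 2 * w.count false

/-!
A coefficient of `h'` at the key `k = ([0], [1])` of degree 4 can only be nonzero on words of
dimension at least 4. Since `D` multiplies `h'` by `xy`, it kills that coefficient on `D u` with
`u` of dimension 2. For `C`, the relation `h'(Cv) = g'(v) + x h'(v)` forces the coefficient of
`g'(v)` to vanish once it vanishes for `h'(v)` and `h'(Cv)`, and `g'(Cv) = y g'(v)` then propagates
both vanishings along every power of `C`. This covers `CC·pt` and `D·pt`, hence `CCCC`, `CCD`,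
`DCC`, `DD`; `CDC` escapes because nothing controls `g'` on `D`.
-/

theorem cdVec_replicate_true_append (Cop Dop : V →ₗ[ℚ] V) (ptv : V) (j : ℕ) (w : List Bool) :
    cdVec Cop Dop ptv (List.replicate j true ++ w) = Cop^[j] (cdVec Cop Dop ptv w) := by
  induction j with
  | zero => rfl
  | succ j ih =>
    rw [List.replicate_succ, List.cons_append, cdVec, ih, Function.iterate_succ_apply']

theorem wordDim_cons_true (w : List Bool) : wordDim (true :: w) = wordDim w + 1 := by
  simp [wordDim]
  omega

section KeyCoefficients

variable {Cop Dop : V →ₗ[ℚ] V} {h' g' : V →ₗ[ℚ] KMod} {k : Key}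

theorem g_coeff_eq_zero_of_h_coeff_eq_zero (hC : ∀ v : V, h' (Cop v) = g' v + px • h' v)
    {v : V} (hv : h' v k = 0) (hCv : h' (Cop v) k = 0) : g' v k = 0 := by
  have hcoeff : h' (Cop v) k = g' v k + px * h' v k := by simp [hC v]
  rwa [hv, hCv, mul_zero, add_zero, eq_comm] at hcoeff

theorem coeff_iterate_cone_eq_zero (hC : ∀ v : V, h' (Cop v) = g' v + px • h' v)
    (gC : ∀ v : V, g' (Cop v) = py • g' v) {v : V} (hv : h' v k = 0) (hg : g' v k = 0)
    (j : ℕ) : h' (Cop^[j] v) k = 0 ∧ g' (Cop^[j] v) k = 0 := by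
  induction j with
  | zero => exact ⟨hv, hg⟩
  | succ j ih =>
    rw [Function.iterate_succ_apply', hC, gC]
    simp [ih.1, ih.2]

variable {ptv : V}

theorem h_coeff_cone_pow_word_eq_zero (hC : ∀ v : V, h' (Cop v) = g' v + px • h' v)
    (gC : ∀ v : V, g' (Cop v) = py • g' v)
    (hdeg : ∀ w : List Bool, h' (cdVec Cop Dop ptv w) k ≠ 0 → degKey k ≤ wordDim w)
    (j : ℕ) {u : List Bool} (hu : wordDim u + 2 ≤ degKey k) :
    h' (cdVec Cop Dop ptv (List.replicate j true ++ u)) k = 0 := by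
  have hv : h' (cdVec Cop Dop ptv u) k = 0 := by
    by_contra hne
    exact (hdeg u hne).not_gt (by omega)
  have hCv : h' (cdVec Cop Dop ptv (true :: u)) k = 0 := by
    by_contra hne
    exact (hdeg _ hne).not_gt (by rw [wordDim_cons_true]; omega)
  rw [cdVec_replicate_true_append]
  exact (coeff_iterate_cone_eq_zero hC gC hv (g_coeff_eq_zero_of_h_coeff_eq_zero hC hv hCv) j).1

theorem h_coeff_D_word_eq_zero (hD : ∀ v : V, h' (Dop v) = (px * py) • h' v)
    (hdeg : ∀ w : List Bool, h' (cdVec Cop Dop ptv w) k ≠ 0 → degKey k ≤ wordDim w)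
    {u : List Bool} (hu : wordDim u < degKey k) :
    h' (cdVec Cop Dop ptv (false :: u)) k = 0 := by
  have hv : h' (cdVec Cop Dop ptv u) k = 0 := by
    by_contra hne
    exact (hdeg u hne).not_gt (by omega)
  simp [cdVec, hD, hv]

end KeyCoefficients

theorem finrank_span_of_linearIndependent_four {a b c d : V}
    (h : LinearIndependent ℚ ![a, b, c, d]) :
    Module.finrank ℚ (Submodule.span ℚ ({a, b, c, d} : Set V)) = 4 := by
  have := finrank_span_eq_card h
  rwa [Matrix.range_cons, Matrix.range_cons, Matrix.range_cons, Matrix.range_cons_empty,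
    Set.singleton_union, Set.singleton_union, Set.singleton_union] at this

theorem finrank_span_of_linearIndependent_five {a b c d e : V}
    (h : LinearIndependent ℚ ![a, b, c, d, e]) :
    Module.finrank ℚ (Submodule.span ℚ ({a, b, c, d, e} : Set V)) = 5 := by
  have := finrank_span_eq_card h
  rwa [Matrix.range_cons, Matrix.range_cons, Matrix.range_cons, Matrix.range_cons,
    Matrix.range_cons_empty, Set.singleton_union, Set.singleton_union, Set.singleton_union,
    Set.singleton_union] at this

theorem stmt16_general {V : Type} [AddCommGroup V] [Module ℚ V]
    (Cop Dop : V →ₗ[ℚ] V) (ptv : V)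
    (h' g' : V →ₗ[ℚ] KMod)
    -- generalised h-vector axioms
    (hC : ∀ v : V, h' (Cop v) = g' v + px • h' v)
    (hD : ∀ v : V, h' (Dop v) = (px * py) • h' v)
    (gC : ∀ v : V, g' (Cop v) = py • g' v)
    -- keyed and palindromic
    (hkeyed : ∀ (w : List Bool) (k : Key), h' (cdVec Cop Dop ptv w) k ≠ 0 →
      ∃ n : ℕ, (h' (cdVec Cop Dop ptv w) k).IsHomogeneous n
        ∧ wordDim w = n + degKey k)
    -- Bayer–Billera: the five 4-dimensional CD-words are linearly independent
    (hBB : LinearIndependent ℚ ![cdVec Cop Dop ptv [true, true, true, true],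
      cdVec Cop Dop ptv [false, true, true], cdVec Cop Dop ptv [true, false, true],
      cdVec Cop Dop ptv [true, true, false], cdVec Cop Dop ptv [false, false]]) :
    h' (cdVec Cop Dop ptv [true, true, true, true]) ([0], [1]) = 0
    ∧ h' (cdVec Cop Dop ptv [false, true, true]) ([0], [1]) = 0
    ∧ h' (cdVec Cop Dop ptv [false, false]) ([0], [1]) = 0
    ∧ h' (cdVec Cop Dop ptv [true, true, false]) ([0], [1]) = 0
    ∧ Module.finrank ℚ (Submodule.span ℚ
        ({cdVec Cop Dop ptv [true, true, true, true],
          cdVec Cop Dop ptv [false, true, true],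
          cdVec Cop Dop ptv [false, false],
          cdVec Cop Dop ptv [true, true, false]} : Set V)) = 4
    ∧ Module.finrank ℚ (Submodule.span ℚ
        ({cdVec Cop Dop ptv [true, true, true, true],
          cdVec Cop Dop ptv [false, true, true],
          cdVec Cop Dop ptv [true, false, true],
          cdVec Cop Dop ptv [true, true, false],
          cdVec Cop Dop ptv [false, false]} : Set V)) = 5 := by
  have hdeg : ∀ w : List Bool, h' (cdVec Cop Dop ptv w) ([0], [1]) ≠ 0 →
      degKey ([0], [1]) ≤ wordDim w := by
    intro w hw
    obtain ⟨n, -, hn⟩ := hkeyed w _ hw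
    omega
  have hBB4 : LinearIndependent ℚ ![cdVec Cop Dop ptv [true, true, true, true],
      cdVec Cop Dop ptv [false, true, true], cdVec Cop Dop ptv [false, false],
      cdVec Cop Dop ptv [true, true, false]] := by
    convert hBB.comp ![0, 1, 4, 3] (by decide) using 1
    ext i
    fin_cases i <;> rfl
  exact ⟨h_coeff_cone_pow_word_eq_zero hC gC hdeg 2 (u := [true, true]) (by decide),
    h_coeff_D_word_eq_zero hD hdeg (u := [true, true]) (by decide),
    h_coeff_D_word_eq_zero hD hdeg (u := [false]) (by decide),
    h_coeff_cone_pow_word_eq_zero hC gC hdeg 2 (u := [false]) (by decide),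
    finrank_span_of_linearIndependent_four hBB4,
    finrank_span_of_linearIndependent_five hBB⟩

/-- the `c₀`-component (the coefficient of `w_{0;1}`) of any
complete palindromic keyed generalised h-vector vanishes on the four
4-dimensional CD-polytopes `CCCC·pt`, `DCC·pt`, `DD·pt` and `CCD·pt`, whose
flag vectors span a hyperplane (a 4-dimensional subspace) in the 5-dimensional
span of 4-polytope flag vectors. -/
theorem stmt16 {V : Type} [AddCommGroup V] [Module ℚ V]
    (Cop Dop Iop : V →ₗ[ℚ] V) (ptv : V)
    (h' g' : V →ₗ[ℚ] KMod)
    -- generalised h-vector axioms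
    (hpt : h' ptv = wsym ([], []))
    (hC : ∀ v : V, h' (Cop v) = g' v + px • h' v)
    (hI : ∀ v : V, h' (Iop v) = (px + py) • h' v)
    (hDdef : Dop = Iop ∘ₗ Cop - Cop ∘ₗ Cop)
    (hD : ∀ v : V, h' (Dop v) = (px * py) • h' v)
    (gC : ∀ v : V, g' (Cop v) = py • g' v)
    -- keyed and palindromic
    (hkeyed : ∀ (w : List Bool) (k : Key), h' (cdVec Cop Dop ptv w) k ≠ 0 →
      ∃ n : ℕ, (h' (cdVec Cop Dop ptv w) k).IsHomogeneous n
        ∧ wordDim w = n + degKey k)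
    (hpal : ∀ (w : List Bool) (k : Key),
      rename ⇑(Equiv.swap (0 : Fin 2) 1) (h' (cdVec Cop Dop ptv w) k)
        = h' (cdVec Cop Dop ptv w) k)
    -- complete
    (hcomplete : Function.Injective h')
    -- Bayer–Billera: the five 4-dimensional CD-words are linearly independent
    (hBB : LinearIndependent ℚ ![cdVec Cop Dop ptv [true, true, true, true],
      cdVec Cop Dop ptv [false, true, true], cdVec Cop Dop ptv [true, false, true],
      cdVec Cop Dop ptv [true, true, false], cdVec Cop Dop ptv [false, false]]) :
    h' (cdVec Cop Dop ptv [true, true, true, true]) ([0], [1]) = 0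
    ∧ h' (cdVec Cop Dop ptv [false, true, true]) ([0], [1]) = 0
    ∧ h' (cdVec Cop Dop ptv [false, false]) ([0], [1]) = 0
    ∧ h' (cdVec Cop Dop ptv [true, true, false]) ([0], [1]) = 0
    ∧ Module.finrank ℚ (Submodule.span ℚ
        ({cdVec Cop Dop ptv [true, true, true, true],
          cdVec Cop Dop ptv [false, true, true],
          cdVec Cop Dop ptv [false, false],
          cdVec Cop Dop ptv [true, true, false]} : Set V)) = 4
    ∧ Module.finrank ℚ (Submodule.span ℚ
        ({cdVec Cop Dop ptv [true, true, true, true],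
          cdVec Cop Dop ptv [false, true, true],
          cdVec Cop Dop ptv [true, false, true],
          cdVec Cop Dop ptv [true, true, false],
          cdVec Cop Dop ptv [false, false]} : Set V)) = 5 :=
  stmt16_general Cop Dop ptv h' g' hC hD gC hkeyed hBB
end
end

section
/- For the total link vector ℓ(Δ) with components ℓ_i(Δ)=Σ_{dim L_δ = i} f(L_δ), the cylinder and cone operators satisfy ℓ(IΔ)=(1+2C)ℓ(Δ) and ℓ(CΔ)=(1+C)ℓ(Δ)+f(Δ). -/
theorem stmt17_general {V P : Type} [AddCommGroup V] [Module ℚ V]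
    (Cop : V →ₗ[ℚ] V)
    (f : P → V)
    (F : P → Type) [∀ Δ, Fintype (F Δ)]
    (link : (Δ : P) → F Δ → V)
    (cyl cone : P → P)
    (eI : (Δ : P) → F (cyl Δ) ≃ (F Δ ⊕ F Δ ⊕ F Δ))
    (hlinkI : ∀ (Δ : P) (δ : F (cyl Δ)),
      link (cyl Δ) δ = Sum.elim (fun δ₁ => Cop (link Δ δ₁))
        (Sum.elim (fun δ₁ => Cop (link Δ δ₁)) (fun δ₁ => link Δ δ₁)) (eI Δ δ))
    (eC : (Δ : P) → F (cone Δ) ≃ (Unit ⊕ F Δ ⊕ F Δ))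
    (hlinkC : ∀ (Δ : P) (δ : F (cone Δ)),
      link (cone Δ) δ = Sum.elim (fun _ => f Δ)
        (Sum.elim (fun δ₁ => Cop (link Δ δ₁)) (fun δ₁ => link Δ δ₁)) (eC Δ δ)) :
    ∀ Δ : P,
      (∑ δ : F (cyl Δ), link (cyl Δ) δ)
          = (∑ δ : F Δ, link Δ δ) + 2 • Cop (∑ δ : F Δ, link Δ δ)
      ∧ (∑ δ : F (cone Δ), link (cone Δ) δ)
          = (∑ δ : F Δ, link Δ δ) + Cop (∑ δ : F Δ, link Δ δ) + f Δ := by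
  intro Δ
  rw [Fintype.sum_equiv (eI Δ) _ _ (hlinkI Δ), Fintype.sum_equiv (eC Δ) _ _ (hlinkC Δ)]
  simp only [Fintype.sum_sum_type, Sum.elim_inl, Sum.elim_inr, Fintype.sum_unique, map_sum]
  constructor <;> abel

/-- for the total link vector `ℓ(Δ) = Σ_{δ ⊆ Δ} f(L_δ)` (with
the convention `f(L_Δ) = f(∅) = fempty`), the cylinder and cone operators
satisfy `ℓ(IΔ) = (1 + 2C) ℓ(Δ)` and `ℓ(CΔ) = (1 + C) ℓ(Δ) + f(Δ)`.
Faces of `IΔ` are `δ×{0}`, `δ×{1}` (links `C L_δ`) and `δ×[0,1]` (link `L_δ`);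
faces of `CΔ` are the apex (link `Δ`), the faces `δ` of `Δ` (links `C L_δ`)
and the cones `Cδ` (links `L_δ`). -/
theorem stmt17 {V P : Type} [AddCommGroup V] [Module ℚ V]
    (Cop : V →ₗ[ℚ] V) (fempty fpt : V) (hce : Cop fempty = fpt)
    (f : P → V)
    (F : P → Type) [∀ Δ, Fintype (F Δ)]
    (link : (Δ : P) → F Δ → V)
    (cyl cone : P → P)
    (eI : (Δ : P) → F (cyl Δ) ≃ (F Δ ⊕ F Δ ⊕ F Δ))
    (hlinkI : ∀ (Δ : P) (δ : F (cyl Δ)),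
      link (cyl Δ) δ = Sum.elim (fun δ₁ => Cop (link Δ δ₁))
        (Sum.elim (fun δ₁ => Cop (link Δ δ₁)) (fun δ₁ => link Δ δ₁)) (eI Δ δ))
    (eC : (Δ : P) → F (cone Δ) ≃ (Unit ⊕ F Δ ⊕ F Δ))
    (hlinkC : ∀ (Δ : P) (δ : F (cone Δ)),
      link (cone Δ) δ = Sum.elim (fun _ => f Δ)
        (Sum.elim (fun δ₁ => Cop (link Δ δ₁)) (fun δ₁ => link Δ δ₁)) (eC Δ δ)) :
    ∀ Δ : P,
      (∑ δ : F (cyl Δ), link (cyl Δ) δ)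
          = (∑ δ : F Δ, link Δ δ) + 2 • Cop (∑ δ : F Δ, link Δ δ)
      ∧ (∑ δ : F (cone Δ), link (cone Δ) δ)
          = (∑ δ : F Δ, link Δ δ) + Cop (∑ δ : F Δ, link Δ δ) + f Δ :=
  stmt17_general Cop f F link cyl cone eI hlinkI eC hlinkC
end

section
/- The toric g-recursion g(DL)=xy·g(L), together with g(∅)=1 and g(CL)=y·g(L), determines a unique generalised h-vector h on the span of convex polytope flag vectors, and this h satisfies h(W·pt) ∈ ℤ[x,y] with palindromic values on every CD-word W. -/
open MvPolynomial

noncomputable section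

variable {V : Type} [AddCommGroup V] [Module ℚ V]

/-! On CD-words the recursion can be solved in closed form: `D` multiplies both `g` and `h` by
`xy`, and `C` multiplies `g` by `y`, so `g(W·pt) = y^(c+1) (xy)^d` and, by
`⟨c+1⟩ = y^(c+1) + x⟨c⟩`, `h(W·pt) = ⟨d, c⟩`, where `c` and `d` count the letters `C`
and `D` of `W`. Hence `h` is fixed on a spanning set, and its values there are integral and
symmetric in `x` and `y`. -/

lemma br_succ (j : ℕ) : br (j + 1) = py ^ (j + 1) + px * br j := by
  rw [br, Finset.sum_range_succ', br, Finset.mul_sum]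
  simp only [pow_zero, one_mul, Nat.sub_zero, Nat.succ_sub_succ, pow_succ' px]
  rw [add_comm]
  simp only [mul_assoc]

lemma rename_swap_px : rename (Equiv.swap (0 : Fin 2) 1) px = py := by
  simp [px, py]

lemma rename_swap_py : rename (Equiv.swap (0 : Fin 2) 1) py = px := by
  simp [px, py]

lemma rename_swap_br (j : ℕ) : rename (Equiv.swap (0 : Fin 2) 1) (br j) = br j := by
  simp only [br, map_sum, map_mul, map_pow, rename_swap_px, rename_swap_py]
  rw [← Finset.sum_range_reflect]
  refine Finset.sum_congr rfl fun t ht => ?_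
  have ht : t ≤ j := Nat.lt_succ_iff.mp (Finset.mem_range.mp ht)
  rw [Nat.add_sub_cancel, Nat.sub_sub_self ht, mul_comm]

lemma rename_swap_brr (i j : ℕ) : rename (Equiv.swap (0 : Fin 2) 1) (brr i j) = brr i j := by
  simp only [brr, map_mul, map_pow, rename_swap_px, rename_swap_py, rename_swap_br,
    mul_comm py]

lemma brr_mem_range_map_intCast (i j : ℕ) :
    brr i j ∈ (MvPolynomial.map (Int.castRingHom ℚ) : MvPolynomial (Fin 2) ℤ →+* R2).range := by
  have hx : px ∈ (MvPolynomial.map (Int.castRingHom ℚ)).range := ⟨X 0, map_X _ _⟩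
  have hy : py ∈ (MvPolynomial.map (Int.castRingHom ℚ)).range := ⟨X 1, map_X _ _⟩
  refine Subring.mul_mem _ (Subring.pow_mem _ (Subring.mul_mem _ hx hy) _) ?_
  exact Subring.sum_mem _ fun t _ =>
    Subring.mul_mem _ (Subring.pow_mem _ hx _) (Subring.pow_mem _ hy _)

lemma exists_intCast_coeff_of_mem_range_map {σ : Type*} {p : MvPolynomial σ ℚ}
    (hp : p ∈ (MvPolynomial.map (Int.castRingHom ℚ) : MvPolynomial σ ℤ →+* _).range)
    (m : σ →₀ ℕ) : ∃ z : ℤ, coeff m p = z := by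
  obtain ⟨q, rfl⟩ := hp
  exact ⟨coeff m q, coeff_map _ _ _⟩

/-- `h` is a generalised h-vector whose `g` obeys the toric recursion. -/
structure IsToricHVector (Cop Dop : V →ₗ[ℚ] V) (ptv : V) (h g : V →ₗ[ℚ] R2) : Prop where
  h_pt : h ptv = 1
  g_pt : g ptv = py
  h_C : ∀ v, h (Cop v) = g v + px * h v
  h_D : ∀ v, h (Dop v) = px * py * h v
  g_C : ∀ v, g (Cop v) = py * g v
  g_D : ∀ v, g (Dop v) = px * py * g v

namespace IsToricHVector

variable {Cop Dop : V →ₗ[ℚ] V} {ptv : V} {h g : V →ₗ[ℚ] R2}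

lemma g_cdVec (H : IsToricHVector Cop Dop ptv h g) (w : List Bool) :
    g (cdVec Cop Dop ptv w) = (px * py) ^ w.count false * py ^ (w.count true + 1) := by
  induction w with
  | nil => simp [cdVec, H.g_pt]
  | cons b w ih =>
    cases b
    · simp only [cdVec, H.g_D, ih, List.count_cons_self, List.count_cons_of_ne Bool.false_ne_true]
      ring
    · simp only [cdVec, H.g_C, ih, List.count_cons_self,
        List.count_cons_of_ne Bool.false_ne_true.symm]
      ring

lemma h_cdVec (H : IsToricHVector Cop Dop ptv h g) (w : List Bool) :
    h (cdVec Cop Dop ptv w) = brr (w.count false) (w.count true) := by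
  induction w with
  | nil => simp [cdVec, H.h_pt, brr, br]
  | cons b w ih =>
    cases b
    · simp only [cdVec, H.h_D, ih, brr, List.count_cons_self,
        List.count_cons_of_ne Bool.false_ne_true]
      ring
    · simp only [cdVec, H.h_C, H.g_cdVec, ih, brr, br_succ, List.count_cons_self,
        List.count_cons_of_ne Bool.false_ne_true.symm]
      ring

lemma h_unique (hspan : Submodule.span ℚ (Set.range (cdVec Cop Dop ptv)) = ⊤)
    {h' g' : V →ₗ[ℚ] R2} (H : IsToricHVector Cop Dop ptv h g)
    (H' : IsToricHVector Cop Dop ptv h' g') : h = h' :=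
  LinearMap.ext_on hspan <| by
    rintro _ ⟨w, rfl⟩
    rw [H.h_cdVec, H'.h_cdVec]

end IsToricHVector

/-- the toric recursion `g(DL) = xy·g(L)`, together with
`g(∅) = 1` (so `g(pt) = y`) and `g(CL) = y·g(L)`, determines a unique
generalised h-vector on the span of convex polytope flag vectors (which,
by Bayer–Billera, is spanned by the CD-words applied to a point); and this
h-vector takes integer, palindromic values on every CD-word. -/
theorem stmt18 {V : Type} [AddCommGroup V] [Module ℚ V]
    (Cop Dop : V →ₗ[ℚ] V) (ptv : V)
    (hspan : Submodule.span ℚ (Set.range (cdVec Cop Dop ptv)) = ⊤)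
    (h₁ g₁ h₂ g₂ : V →ₗ[ℚ] R2)
    (hpt₁ : h₁ ptv = 1) (gpt₁ : g₁ ptv = py)
    (hC₁ : ∀ v : V, h₁ (Cop v) = g₁ v + px * h₁ v)
    (hD₁ : ∀ v : V, h₁ (Dop v) = px * py * h₁ v)
    (gC₁ : ∀ v : V, g₁ (Cop v) = py * g₁ v)
    (gD₁ : ∀ v : V, g₁ (Dop v) = px * py * g₁ v)
    (hpt₂ : h₂ ptv = 1) (gpt₂ : g₂ ptv = py)
    (hC₂ : ∀ v : V, h₂ (Cop v) = g₂ v + px * h₂ v)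
    (hD₂ : ∀ v : V, h₂ (Dop v) = px * py * h₂ v)
    (gC₂ : ∀ v : V, g₂ (Cop v) = py * g₂ v)
    (gD₂ : ∀ v : V, g₂ (Dop v) = px * py * g₂ v) :
    h₁ = h₂
    ∧ ∀ w : List Bool,
        rename ⇑(Equiv.swap (0 : Fin 2) 1) (h₁ (cdVec Cop Dop ptv w))
            = h₁ (cdVec Cop Dop ptv w)
        ∧ ∀ m : Fin 2 →₀ ℕ, ∃ z : ℤ,
            MvPolynomial.coeff m (h₁ (cdVec Cop Dop ptv w)) = (z : ℚ) := by
  have H₁ : IsToricHVector Cop Dop ptv h₁ g₁ := ⟨hpt₁, gpt₁, hC₁, hD₁, gC₁, gD₁⟩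
  have H₂ : IsToricHVector Cop Dop ptv h₂ g₂ := ⟨hpt₂, gpt₂, hC₂, hD₂, gC₂, gD₂⟩
  refine ⟨H₁.h_unique hspan H₂, fun w => ?_⟩
  rw [H₁.h_cdVec]
  exact ⟨rename_swap_brr _ _,
    exists_intCast_coeff_of_mem_range_map (brr_mem_range_map_intCast _ _)⟩
end
end
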